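/- arXiv:math/0211172 — 3 statements merged into one kernel-verified Lean document; each statement's English description precedes it below -/
import Mathlib

section
/- Let (R,m,K) be a complete equidimensional Noetherian local ring. Then Spec R ∖ V(J) is a connected topological space for every ideal J of R of height at least two if and only if the graph Γ_R is connected. -/
open CategoryTheory

universe u

set_option maxHeartbeats 1000000
set_option synthInstance.maxHeartbeats 1000000

/-- The height of an ideal: the infimum of the heights of the primes containing it. -/
noncomputable def idealHeight {R : Type*} [CommRing R] (I : Ideal R) : ℕ∞ :=
  ⨅ p ∈ {p : PrimeSpectrum R | I ≤ p.asIdeal}, Order.height p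

/-- An `R`-module `M` is indecomposable: it is nonzero and is not the (internal) direct sum
of two nonzero submodules. -/
def IsIndecomposable (R M : Type*) [CommRing R] [AddCommGroup M] [Module R M] : Prop :=
  (∃ x : M, x ≠ 0) ∧ ∀ N N' : Submodule R M, IsCompl N N' → N = ⊥ ∨ N' = ⊥

/-- A ring is equidimensional if `dim (R/p) = dim R` for every minimal prime `p`. -/
def IsEquidimensional (R : Type*) [CommRing R] : Prop :=
  ∀ p ∈ minimalPrimes R, ringKrullDim (R ⧸ p) = ringKrullDim R

/-- `j(R) = 0`: no nonzero ideal of `R` has Krull dimension as an `R`-module (i.e. the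
dimension of `R` modulo the annihilator of the ideal) smaller than `dim R`. -/
def JIdealZero (R : Type*) [CommRing R] : Prop :=
  ∀ I : Ideal R, ringKrullDim (R ⧸ Submodule.annihilator I) < ringKrullDim R → I = ⊥

/-- `M` is `S₂` as an `R`-module: every ideal of height at least one contains a
nonzerodivisor on `M`, and every ideal of height at least two contains a regular
sequence of length two on `M`. -/
def IsS2Module (R M : Type*) [CommRing R] [AddCommGroup M] [Module R M] : Prop :=
  (∀ I : Ideal R, 1 ≤ idealHeight I → ∃ x ∈ I, ∀ m : M, x • m = 0 → m = 0) ∧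
  (∀ I : Ideal R, 2 ≤ idealHeight I → ∃ x ∈ I, ∃ y ∈ I,
      (∀ m : M, x • m = 0 → m = 0) ∧
      ∀ m : M, y • m ∈ Ideal.span {x} • (⊤ : Submodule R M) →
        m ∈ Ideal.span {x} • (⊤ : Submodule R M))

/-- For `f` in an `R`-algebra `T`, the ideal `D(f) = {r ∈ R : r • f ∈ R}`. -/
def Dideal (R T : Type*) [CommRing R] [CommRing T] [Algebra R T] (f : T) :
    Ideal R :=
  Submodule.comap (LinearMap.toSpanSingleton R T f) (LinearMap.range (Algebra.linearMap R T))

/-- A subring `S` with `R ⊆ S ⊆ T` (`T` an `R`-algebra, in practice the total quotient ring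
of `R`) is an `S₂`-ification of `R` if it is module-finite over `R`, is `S₂` as an
`R`-module, and `D(s)` has height at least two for every `s ∈ S`. -/
def IsS2ification (R T : Type*) [CommRing R] [CommRing T] [Algebra R T]
    (S : Subalgebra R T) : Prop :=
  Module.Finite R S ∧ IsS2Module R S ∧ ∀ s ∈ S, 2 ≤ idealHeight (Dideal R T s)

/-- The graph `Γ_R` whose vertices are the minimal primes of `R`, with an edge joining
`P` and `Q` iff `P + Q` has height at most one, is connected: any two minimal primes are
joined by a finite chain of minimal primes in which consecutive sums have height at most one. -/
def GammaConnected (R : Type*) [CommRing R] : Prop :=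
  ∀ p ∈ minimalPrimes R, ∀ q ∈ minimalPrimes R,
    ∃ (r : ℕ) (c : ℕ → Ideal R), c 0 = p ∧ c r = q ∧
      (∀ i, i ≤ r → c i ∈ minimalPrimes R) ∧
      (∀ i, i < r → idealHeight (c i ⊔ c (i + 1)) ≤ 1)

/-- The set underlying the `S₂`-ification: the elements `f` of the total quotient ring
of `R` such that `D(f)` has height at least two. -/
def s2Set (R : Type u) [CommRing R] : Set (FractionRing R) :=
  {f : FractionRing R | 2 ≤ idealHeight (Dideal R (FractionRing R) f)}
section Aux

open PrimeSpectrum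

variable {R : Type u} [CommRing R]

lemma idealHeight_le_height {I : Ideal R} {p : PrimeSpectrum R} (h : I ≤ p.asIdeal) :
    idealHeight I ≤ Order.height p :=
  iInf₂_le p h

lemma two_le_idealHeight_iff {I : Ideal R} :
    2 ≤ idealHeight I ↔ ∀ p : PrimeSpectrum R, I ≤ p.asIdeal → 2 ≤ Order.height p :=
  le_iInf₂_iff

lemma minimal_isMin {p : PrimeSpectrum R} (hp : p.asIdeal ∈ minimalPrimes R) : IsMin p := by
  intro q hq
  rw [← PrimeSpectrum.asIdeal_le_asIdeal] at hq ⊢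
  exact hp.2 ⟨q.isPrime, bot_le⟩ hq

lemma minimal_notMem_zeroLocus {J : Ideal R} (hJ : 2 ≤ idealHeight J)
    {p : PrimeSpectrum R} (hp : p.asIdeal ∈ minimalPrimes R) :
    p ∉ PrimeSpectrum.zeroLocus (J : Set R) := by
  intro hmem
  have h0 : Order.height p = 0 := Order.height_eq_zero.mpr (minimal_isMin hp)
  have := (two_le_idealHeight_iff.mp hJ p hmem).trans h0.le
  exact (by norm_num : ¬ ((2:ℕ∞) ≤ 0)) this

/-- From `idealHeight I ≤ 1` produce a prime of height at most 1 containing `I`. -/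
lemma exists_prime_of_idealHeight_le_one {I : Ideal R} (h : idealHeight I ≤ 1) :
    ∃ p : PrimeSpectrum R, I ≤ p.asIdeal ∧ Order.height p ≤ 1 := by
  by_contra hc
  push_neg at hc
  have h2 : (2:ℕ∞) ≤ idealHeight I := by
    rw [two_le_idealHeight_iff]
    intro p hp
    have := hc p hp
    exact Order.add_one_le_of_lt this
  exact absurd (h2.trans h) (by norm_num)

/-- Each piece `V(p) ∖ V(J)` containing its generic point is preconnected. -/
lemma preconnected_piece (J : Ideal R) (p : PrimeSpectrum R)
    (hp : p ∉ PrimeSpectrum.zeroLocus (J : Set R)) :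
    IsPreconnected ((PrimeSpectrum.zeroLocus (p.asIdeal : Set R)) ∩
      (PrimeSpectrum.zeroLocus (J : Set R))ᶜ) := by
  set s := (PrimeSpectrum.zeroLocus (p.asIdeal : Set R)) ∩
      (PrimeSpectrum.zeroLocus (J : Set R))ᶜ with hs
  have hps : p ∈ s := ⟨(PrimeSpectrum.mem_zeroLocus _ _).mpr le_rfl, hp⟩
  have hclos : closure s = PrimeSpectrum.zeroLocus (p.asIdeal : Set R) := by
    apply le_antisymm
    · exact closure_minimal Set.inter_subset_left (PrimeSpectrum.isClosed_zeroLocus _)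
    · rw [← PrimeSpectrum.closure_singleton]
      exact closure_mono (Set.singleton_subset_iff.mpr hps)
  have hirr : IsIrreducible s := by
    rw [← isIrreducible_iff_closure, hclos,
      PrimeSpectrum.isIrreducible_zeroLocus_iff]
    rw [p.isPrime.radical]; exact p.isPrime
  exact hirr.isConnected.isPreconnected

end Aux

/-- Let `(R,m,K)` be a complete equidimensional Noetherian local ring.
Then `Spec R ∖ V(J)` is a connected topological space for every ideal `J` of height at
least two if and only if the graph `Γ_R` is connected. -/
theorem connected_complements_iff_gamma_connected
    {R : Type u} [CommRing R] [IsNoetherianRing R] [IsLocalRing R]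
    [IsAdicComplete (IsLocalRing.maximalIdeal R) R]
    (hequi : IsEquidimensional R) :
    (∀ J : Ideal R, 2 ≤ idealHeight J →
        IsConnected ((PrimeSpectrum.zeroLocus (J : Set R))ᶜ)) ↔
      GammaConnected R := by
  constructor
  · -- complements connected ⇒ Γ connected
    intro hcon p hp q hq
    by_contra hnq
    set A : Set (Ideal R) := {P | P ∈ minimalPrimes R ∧ ∃ (r : ℕ) (c : ℕ → Ideal R),
      c 0 = p ∧ c r = P ∧ (∀ i, i ≤ r → c i ∈ minimalPrimes R) ∧
      (∀ i, i < r → idealHeight (c i ⊔ c (i + 1)) ≤ 1)} with hA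
    have hpA : p ∈ A :=
      ⟨hp, 0, fun _ => p, rfl, rfl, fun i _ => hp, fun i hi => absurd hi (Nat.not_lt_zero i)⟩
    have hqA : q ∉ A := fun h => hnq h.2
    -- A is closed under edges of the graph
    have hedge : ∀ P ∈ A, ∀ Q ∈ minimalPrimes R, idealHeight (P ⊔ Q) ≤ 1 → Q ∈ A := by
      rintro P ⟨hPmin, r, c, hc0, hcr, hcmem, hcht⟩ Q hQ hPQ
      refine ⟨hQ, r + 1, fun i => if i ≤ r then c i else Q, by simp [hc0], by simp, ?_, ?_⟩
      · intro i hi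
        by_cases h : i ≤ r
        · simpa [h] using hcmem i h
        · simpa [h] using hQ
      · intro i hi
        rcases Nat.lt_succ_iff_lt_or_eq.mp hi with h | h
        · have h1 : i ≤ r := h.le
          have h2 : i + 1 ≤ r := h
          simpa [h1, h2] using hcht i h
        · subst h
          have h1 : i ≤ i := le_rfl
          have h2 : ¬ (i + 1 ≤ i) := by omega
          simpa [h1, h2, hcr] using hPQ
    set B : Set (Ideal R) := minimalPrimes R \ A with hB
    have hqB : q ∈ B := ⟨hq, hqA⟩
    have hfinA : A.Finite :=
      (minimalPrimes.finite_of_isNoetherianRing R).subset (fun P hP => hP.1)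
    have hfinB : B.Finite :=
      (minimalPrimes.finite_of_isNoetherianRing R).subset Set.diff_subset
    -- a prime containing the intersection of a finite set of ideals contains one of them
    have hsInf : ∀ (S : Set (Ideal R)), S.Finite → ∀ (π : Ideal R), π.IsPrime →
        sInf S ≤ π → ∃ P ∈ S, P ≤ π := by
      intro S hS π hπ hle
      have h1 : hS.toFinset.inf id ≤ π := by
        rwa [Finset.inf_id_eq_sInf, hS.coe_toFinset]
      have := hπ.inf_le'.mp h1
      simpa using this
    have hJht : 2 ≤ idealHeight (sInf A ⊔ sInf B) := by
      rw [two_le_idealHeight_iff]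
      intro π hπ
      obtain ⟨P, hPA, hPπ⟩ := hsInf A hfinA π.asIdeal π.isPrime (le_sup_left.trans hπ)
      obtain ⟨Q, hQB, hQπ⟩ := hsInf B hfinB π.asIdeal π.isPrime (le_sup_right.trans hπ)
      have hPQ : ¬ idealHeight (P ⊔ Q) ≤ 1 := fun h => hQB.2 (hedge P hPA Q hQB.1 h)
      have h2 : 2 ≤ idealHeight (P ⊔ Q) := Order.add_one_le_of_lt (lt_of_not_ge hPQ)
      exact h2.trans (idealHeight_le_height (sup_le hPπ hQπ))
    have hU := hcon _ hJht
    have hsub := isPreconnected_iff_subset_of_disjoint_closed.mp hU.isPreconnected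
      (PrimeSpectrum.zeroLocus ((sInf A : Ideal R) : Set R))
      (PrimeSpectrum.zeroLocus ((sInf B : Ideal R) : Set R))
      (PrimeSpectrum.isClosed_zeroLocus _) (PrimeSpectrum.isClosed_zeroLocus _)
      (by
        intro π _
        obtain ⟨m, hm, hmle⟩ := Ideal.exists_minimalPrimes_le (I := (⊥ : Ideal R))
          (J := π.asIdeal) bot_le
        have hm' : m ∈ minimalPrimes R := hm
        by_cases hmA : m ∈ A
        · exact Or.inl ((PrimeSpectrum.mem_zeroLocus _ _).mpr
            (SetLike.coe_subset_coe.mpr ((sInf_le hmA).trans hmle)))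
        · have hmB : m ∈ B := ⟨hm', hmA⟩
          exact Or.inr ((PrimeSpectrum.mem_zeroLocus _ _).mpr
            (SetLike.coe_subset_coe.mpr ((sInf_le hmB).trans hmle))))
      (by
        rw [Set.eq_empty_iff_forall_notMem]
        rintro π ⟨hπc, hπA, hπB⟩
        refine hπc ((PrimeSpectrum.mem_zeroLocus _ _).mpr (SetLike.coe_subset_coe.mpr ?_))
        exact sup_le (SetLike.coe_subset_coe.mp ((PrimeSpectrum.mem_zeroLocus _ _).mp hπA))
          (SetLike.coe_subset_coe.mp ((PrimeSpectrum.mem_zeroLocus _ _).mp hπB)))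
    have hpprime : p.IsPrime := hp.1.1
    have hqprime : q.IsPrime := hq.1.1
    rcases hsub with h | h
    · -- q would be in A
      have hqU : (⟨q, hqprime⟩ : PrimeSpectrum R) ∉
          PrimeSpectrum.zeroLocus ((sInf A ⊔ sInf B : Ideal R) : Set R) :=
        minimal_notMem_zeroLocus hJht hq
      have := h hqU
      obtain ⟨P, hPA, hPq⟩ := hsInf A hfinA q hqprime
        (SetLike.coe_subset_coe.mp ((PrimeSpectrum.mem_zeroLocus _ _).mp this))
      have : P = q := le_antisymm hPq (hq.2 ⟨hPA.1.1.1, bot_le⟩ hPq)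
      exact hqA (this ▸ hPA)
    · -- p would be in B
      have hpU : (⟨p, hpprime⟩ : PrimeSpectrum R) ∉
          PrimeSpectrum.zeroLocus ((sInf A ⊔ sInf B : Ideal R) : Set R) :=
        minimal_notMem_zeroLocus hJht hp
      have := h hpU
      obtain ⟨Q, hQB, hQp⟩ := hsInf B hfinB p hpprime
        (SetLike.coe_subset_coe.mp ((PrimeSpectrum.mem_zeroLocus _ _).mp this))
      have : Q = p := le_antisymm hQp (hp.2 ⟨hQB.1.1.1, bot_le⟩ hQp)
      exact hQB.2 (this ▸ hpA)
  · -- Γ connected ⇒ complements connected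
    intro hgamma J hJ
    obtain ⟨p0, hp0min, hp0le⟩ := Ideal.exists_minimalPrimes_le (I := (⊥ : Ideal R))
      (J := IsLocalRing.maximalIdeal R) bot_le
    have hp0min' : p0 ∈ minimalPrimes R := hp0min
    have hp0prime : p0.IsPrime := hp0min'.1.1
    set x0 : PrimeSpectrum R := ⟨p0, hp0prime⟩ with hx0def
    have hx0 : x0 ∈ (PrimeSpectrum.zeroLocus (J : Set R))ᶜ :=
      minimal_notMem_zeroLocus hJ hp0min'
    refine ⟨⟨x0, hx0⟩, ?_⟩
    apply isPreconnected_of_forall x0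
    intro y hy
    obtain ⟨q, hqmin, hqle⟩ := Ideal.exists_minimalPrimes_le (I := (⊥ : Ideal R))
      (J := y.asIdeal) bot_le
    have hqmin' : q ∈ minimalPrimes R := hqmin
    obtain ⟨r, c, hc0, hcr, hcmem, hcht⟩ := hgamma p0 hp0min' q hqmin'
    set C : ℕ → Set (PrimeSpectrum R) := fun i =>
      PrimeSpectrum.zeroLocus ((c i : Ideal R) : Set R) ∩
        (PrimeSpectrum.zeroLocus (J : Set R))ᶜ with hC
    have hCsub : ∀ i, C i ⊆ (PrimeSpectrum.zeroLocus (J : Set R))ᶜ :=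
      fun i => Set.inter_subset_right
    have hCpre : ∀ i, i ≤ r → _root_.IsPreconnected (C i) := by
      intro i hi
      have hmin := hcmem i hi
      exact preconnected_piece J ⟨c i, hmin.1.1⟩ (minimal_notMem_zeroLocus hJ hmin)
    have hCint : ∀ i, i < r → (C i ∩ C (i + 1)).Nonempty := by
      intro i hi
      obtain ⟨π, hπle, hπht⟩ := exists_prime_of_idealHeight_le_one (hcht i hi)
      have hπU : π ∈ (PrimeSpectrum.zeroLocus (J : Set R))ᶜ := by
        intro hmem
        have h2 := (two_le_idealHeight_iff.mp hJ π hmem).trans hπht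
        norm_num at h2
      refine ⟨π, ⟨?_, hπU⟩, ⟨?_, hπU⟩⟩
      · exact (PrimeSpectrum.mem_zeroLocus _ _).mpr
          (SetLike.coe_subset_coe.mpr (le_sup_left.trans hπle))
      · exact (PrimeSpectrum.mem_zeroLocus _ _).mpr
          (SetLike.coe_subset_coe.mpr (le_sup_right.trans hπle))
    have key : ∀ k, k ≤ r → _root_.IsPreconnected (⋃ i < k + 1, C i) := by
      intro k
      induction k with
      | zero =>
        intro _
        have : ⋃ i < 0 + 1, C i = C 0 := by
          ext x; simp [Nat.lt_one_iff]
        rw [this]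
        exact hCpre 0 (Nat.zero_le r)
      | succ n ih =>
        intro hk
        rw [Set.biUnion_lt_succ]
        refine IsPreconnected.union' ?_ (ih (by omega)) (hCpre (n + 1) hk)
        obtain ⟨π, hπ1, hπ2⟩ := hCint n (by omega)
        exact ⟨π, Set.mem_iUnion₂.mpr ⟨n, by omega, hπ1⟩, hπ2⟩
    refine ⟨⋃ i < r + 1, C i, Set.iUnion₂_subset fun i _ => hCsub i, ?_, ?_, key r le_rfl⟩
    · refine Set.mem_iUnion₂.mpr ⟨0, by omega, ⟨?_, hx0⟩⟩
      rw [hc0]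
      exact (PrimeSpectrum.mem_zeroLocus _ _).mpr subset_rfl
    · refine Set.mem_iUnion₂.mpr ⟨r, by omega, ⟨?_, hy⟩⟩
      rw [hcr]
      exact (PrimeSpectrum.mem_zeroLocus _ _).mpr (SetLike.coe_subset_coe.mpr hqle)
end

section
/- Let (R,m,K) be a Noetherian local ring with j(R) = 0 which is S2. If I and I′ are ideals of R with I·I′ = (0) and the height of I + I′ at least two, then I = (0) or I′ = (0). -/
open CategoryTheory

universe u

set_option maxHeartbeats 1000000
set_option synthInstance.maxHeartbeats 1000000

private lemma aux_unit_kill {R : Type*} [CommRing R] {x a a' r : R}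
    (hxa : a + a' = x) (hr : r * x = a) (haa' : a * a' = 0)
    (hx : ∀ m : R, x * m = 0 → m = 0) (hu : IsUnit r) : a' = 0 := by
  have het : a * (1 - r) = r * a' := by linear_combination -hr - r * hxa
  have ht0 : a * (1 - r) = 0 :=
    hx _ (by linear_combination (-(a * (1 - r))) * hxa + a * het + haa')
  have hra : r * a' = 0 := by rw [← het, ht0]
  exact hu.mul_left_cancel (by rw [hra, mul_zero])

/-- Let `(R,m,K)` be a Noetherian local ring with `j(R) = 0` which is `S₂`.
If `I` and `I'` are ideals of `R` with `I·I' = (0)` and the height of `I + I'` at least two,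
then `I = (0)` or `I' = (0)`. -/
theorem eq_bot_or_eq_bot_of_mul_eq_bot
    {R : Type u} [CommRing R] [IsNoetherianRing R] [IsLocalRing R]
    (hj : JIdealZero R) (hS2 : IsS2Module R R)
    (I I' : Ideal R) (hmul : I * I' = ⊥) (hht : 2 ≤ idealHeight (I ⊔ I')) :
    I = ⊥ ∨ I' = ⊥ := by
  obtain ⟨x, hxmem, y, hymem, hx0, hy⟩ := hS2.2 (I ⊔ I') hht
  have hx : ∀ m : R, x * m = 0 → m = 0 := by
    intro m hm; exact hx0 m (by rwa [smul_eq_mul])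
  obtain ⟨a, ha, a', ha', hxa⟩ := Submodule.mem_sup.mp hxmem
  obtain ⟨b, hb, b', hb', hyb⟩ := Submodule.mem_sup.mp hymem
  have hz : ∀ u ∈ I, ∀ v ∈ I', u * v = 0 := fun u hu v hv => by
    have h := Ideal.mul_mem_mul hu hv
    rwa [hmul, Ideal.mem_bot] at h
  have haa' : a * a' = 0 := hz a ha a' ha'
  have e1 : a * b' = 0 := hz a ha b' hb'
  have e2 : b * a' = 0 := hz b hb a' ha'
  -- the submodule span{x} • ⊤ is just the ideal span{x}
  have hspan : Ideal.span {x} • (⊤ : Submodule R R) = Ideal.span {x} := by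
    apply le_antisymm
    · refine Submodule.smul_le.mpr fun r hr m _ => ?_
      exact Ideal.mul_mem_right m _ hr
    · intro z hz'
      have := Submodule.smul_mem_smul hz' (Submodule.mem_top (x := (1 : R)))
      simpa using this
  have h1 : y * a = x * b := by
    rw [← hyb, ← hxa]; linear_combination e1 - e2
  have h2 : y * a' = x * b' := by
    rw [← hyb, ← hxa]; linear_combination e2 - e1
  have hmemx : ∀ c : R, x * c ∈ Ideal.span {x} • (⊤ : Submodule R R) := by
    intro c
    have := Submodule.smul_mem_smul (Ideal.mem_span_singleton_self x)
      (Submodule.mem_top (x := c))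
    simpa [smul_eq_mul] using this
  have hamem : a ∈ Ideal.span {x} := by
    rw [← hspan]
    exact hy a (by show y * a ∈ _; rw [h1]; exact hmemx b)
  have ha'mem : a' ∈ Ideal.span {x} := by
    rw [← hspan]
    exact hy a' (by show y * a' ∈ _; rw [h2]; exact hmemx b')
  obtain ⟨r, hr⟩ := Ideal.mem_span_singleton'.mp hamem
  obtain ⟨s, hs⟩ := Ideal.mem_span_singleton'.mp ha'mem
  have hrs : r + s = 1 := by
    have h := hx (1 - (r + s)) (by linear_combination -hxa - hr - hs)
    linear_combination -h
  rcases IsLocalRing.isUnit_or_isUnit_of_add_one hrs with hu | hu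
  · -- r is a unit, so a' = 0, hence x = a ∈ I, hence I' = 0
    have ha'0 : a' = 0 := aux_unit_kill hxa hr haa' hx hu
    have hxI : x ∈ I := by rw [← hxa, ha'0, add_zero]; exact ha
    right
    rw [eq_bot_iff]
    intro u hu'
    exact hx u (hz x hxI u hu')
  · -- s is a unit, so a = 0, hence x = a' ∈ I', hence I = 0
    have ha0 : a = 0 := aux_unit_kill (by linear_combination hxa) hs
      (by linear_combination haa') hx hu
    have hxI' : x ∈ I' := by rw [← hxa, ha0, zero_add]; exact ha'
    left
    rw [eq_bot_iff]
    intro u hu'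
    exact hx u (by linear_combination hz u hu' x hxI')
end

section
/- Let (R,m,K) be a Noetherian local ring with j(R) = 0, let T be its total quotient ring, and let S = {f ∈ T : height D(f) ≥ 2}. If S_0 is a ring with R ⊆ S_0 ⊆ S such that S_0 is a finitely generated R-module and S_0 is S2 as an R-module, then S_0 = S. -/
open CategoryTheory

universe u

set_option maxHeartbeats 1000000
set_option synthInstance.maxHeartbeats 1000000

/-!
If `height D(f) ≥ 2`, then the ideal `J = {r ∈ R : r f ∈ S₀}` contains `D(f)`, so it also has
height at least two and contains a regular sequence `x, y` on `S₀`. Now `x f` and `y f` lie in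
`S₀` and `y (x f) = x (y f) ∈ x S₀`, so `x f ∈ x S₀`; since `x` is a nonzerodivisor of `R`,
hence a unit of `T`, it cancels and `f ∈ S₀`.
-/

open nonZeroDivisors
open scoped Pointwise

theorem idealHeight_mono {R : Type*} [CommRing R] {I J : Ideal R} (h : I ≤ J) :
    idealHeight I ≤ idealHeight J :=
  le_iInf₂ fun p hp => iInf₂_le p (h.trans hp)

section Subalgebra

variable {R T : Type*} [CommRing R] [CommRing T] [Algebra R T] (S : Subalgebra R T)

theorem Dideal_le_comap_toSubmodule (f : T) :
    Dideal R T f ≤ (Subalgebra.toSubmodule S).comap (LinearMap.toSpanSingleton R T f) := by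
  refine Submodule.comap_mono ?_
  rintro _ ⟨r, rfl⟩
  exact S.algebraMap_mem r

theorem Subalgebra.mem_nonZeroDivisors_of_smul_injective
    (hinj : Function.Injective (algebraMap R T)) {x : R}
    (hx : ∀ m : S, x • m = 0 → m = 0) : x ∈ R⁰ := by
  refine mem_nonZeroDivisors_iff_right.mpr fun r hr => hinj ?_
  have hr1 : r • (1 : S) = 0 := hx _ (by rw [smul_smul, mul_comm, hr, zero_smul])
  simpa [Algebra.smul_def] using congrArg Subtype.val hr1

theorem Subalgebra.exists_smul_eq_of_regular {f : T} {x y : R} (hx : x • f ∈ S) (hy : y • f ∈ S)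
    (hreg : ∀ m : S, y • m ∈ Ideal.span {x} • (⊤ : Submodule R S) →
      m ∈ Ideal.span {x} • (⊤ : Submodule R S)) :
    ∃ s ∈ S, x • s = x • f := by
  let a : S := ⟨x • f, hx⟩
  let b : S := ⟨y • f, hy⟩
  have hab : y • a = x • b := Subtype.ext (smul_comm y x f)
  have ha : a ∈ x • (⊤ : Submodule R S) := by
    rw [← Submodule.ideal_span_singleton_smul]
    refine hreg a (hab ▸ ?_)
    rw [Submodule.ideal_span_singleton_smul]
    exact Submodule.smul_mem_pointwise_smul b x ⊤ Submodule.mem_top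
  obtain ⟨s, -, hs⟩ := (Submodule.mem_smul_pointwise_iff_exists a x ⊤).mp ha
  exact ⟨s, s.2, congrArg Subtype.val hs⟩

end Subalgebra

theorem subring_s2_eq_s2Set_general
    {R : Type u} [CommRing R]
    (S₀ : Subalgebra R (FractionRing R))
    (hsub : (↑S₀ : Set (FractionRing R)) ⊆ s2Set R)
    (hS2 : IsS2Module R S₀) :
    (↑S₀ : Set (FractionRing R)) = s2Set R := by
  refine hsub.antisymm fun f hf => ?_
  let J := (Subalgebra.toSubmodule S₀).comap (LinearMap.toSpanSingleton R _ f)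
  have hJ : 2 ≤ idealHeight J := hf.trans (idealHeight_mono (Dideal_le_comap_toSubmodule S₀ f))
  obtain ⟨x, hxJ, y, hyJ, hxreg, hyreg⟩ := hS2.2 J hJ
  obtain ⟨s, hs, hsf⟩ := S₀.exists_smul_eq_of_regular hxJ hyJ hyreg
  have hxunit : IsUnit (algebraMap R (FractionRing R) x) := IsLocalization.map_units _
    (⟨x, S₀.mem_nonZeroDivisors_of_smul_injective (IsFractionRing.injective _ _) hxreg⟩ : R⁰)
  rw [Algebra.smul_def, Algebra.smul_def] at hsf
  exact hxunit.mul_left_cancel hsf ▸ hs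

/-- Let `(R,m,K)` be a Noetherian local ring with `j(R) = 0`, let `T` be
its total quotient ring, and let `S = {f ∈ T : height D(f) ≥ 2}`.  If `S₀` is a ring with
`R ⊆ S₀ ⊆ S` such that `S₀` is a finitely generated `R`-module and `S₀` is `S₂` as an
`R`-module, then `S₀ = S`. -/
theorem subring_s2_eq_s2Set
    {R : Type u} [CommRing R] [IsNoetherianRing R] [IsLocalRing R]
    (hj : JIdealZero R)
    (S₀ : Subalgebra R (FractionRing R))
    (hsub : (↑S₀ : Set (FractionRing R)) ⊆ s2Set R)
    (hfin : Module.Finite R S₀) (hS2 : IsS2Module R S₀) :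
    (↑S₀ : Set (FractionRing R)) = s2Set R :=
  subring_s2_eq_s2Set_general S₀ hsub hS2
end
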